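/- Let h₊₊, h₋₋, Z : ℝ² → ℝ be smooth, write ∂_+ and ∂_− for the two partial derivatives, set y := h₊₊·h₋₋, and assume y(x) ≠ 1 for all x. Define W⁻ := (1−y)^{−1}(∂_−Z − h₋₋·∂_+Z) and W⁺ := (1−y)^{−1}(∂_+Z − h₊₊·∂_−Z). Then pointwise: ∂_+W⁻ − h₊₊·∂_−W⁻ − (∂_−h₊₊)·W⁻ = ∂_−W⁺ − h₋₋·∂_+W⁺ − (∂_+h₋₋)·W⁺ = ½ ∂_+[ ((1+y)/(1−y))·∂_−Z − (2h₋₋/(1−y))·∂_+Z ] + ½ ∂_−[ ((1+y)/(1−y))·∂_+Z − (2h₊₊/(1−y))·∂_−Z ]. -/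

import Mathlib

noncomputable section

/-- Partial derivative of `f` at `x` in the `μ`-th coordinate direction; on the world-sheet
`ℝ²` the coordinate `0` is `x⁺` and the coordinate `1` is `x⁻`. -/
def pd (μ : Fin 2) (f : (Fin 2 → ℝ) → ℝ) (x : Fin 2 → ℝ) : ℝ :=
  fderiv ℝ f x (Pi.single μ 1)

/-- `W⁻ = (1−y)⁻¹(∂₋Z − h₋₋∂₊Z)` where `y = h₊₊h₋₋`. -/
def Wm (hpp hmm Z : (Fin 2 → ℝ) → ℝ) (x : Fin 2 → ℝ) : ℝ :=
  (1 - hpp x * hmm x)⁻¹ * (pd 1 Z x - hmm x * pd 0 Z x)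

/-- `W⁺ = (1−y)⁻¹(∂₊Z − h₊₊∂₋Z)` where `y = h₊₊h₋₋`. -/
def Wp (hpp hmm Z : (Fin 2 → ℝ) → ℝ) (x : Fin 2 → ℝ) : ℝ :=
  (1 - hpp x * hmm x)⁻¹ * (pd 0 Z x - hpp x * pd 1 Z x)

/-- The right-hand side
`½∂₊[((1+y)/(1−y))∂₋Z − (2h₋₋/(1−y))∂₊Z] + ½∂₋[((1+y)/(1−y))∂₊Z − (2h₊₊/(1−y))∂₋Z]`. -/
def RHS (hpp hmm Z : (Fin 2 → ℝ) → ℝ) (x : Fin 2 → ℝ) : ℝ :=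
  pd 0 (fun z => ((1 + hpp z * hmm z) / (1 - hpp z * hmm z)) * pd 1 Z z
      - (2 * hmm z / (1 - hpp z * hmm z)) * pd 0 Z z) x / 2
    + pd 1 (fun z => ((1 + hpp z * hmm z) / (1 - hpp z * hmm z)) * pd 0 Z z
      - (2 * hpp z / (1 - hpp z * hmm z)) * pd 1 Z z) x / 2

/-! The bracket in `RHS` whose derivative is taken along `x⁺` is `2W⁻ − ∂₋Z`, and the other one is
`2W⁺ − ∂₊Z`, so `RHS = ∂₊W⁻ + ∂₋W⁺ − ½(∂₊∂₋Z + ∂₋∂₊Z)`. On the other hand `W⁺ + h₊₊W⁻ = ∂₊Z` and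
`W⁻ + h₋₋W⁺ = ∂₋Z` hold pointwise; differentiating the first along `x⁻` and the second along `x⁺`
turns each covariant expression on the left into the same combination, by the Leibniz rule and
the symmetry of second derivatives. -/

section Calculus

variable {f g : (Fin 2 → ℝ) → ℝ} {x : Fin 2 → ℝ}

lemma pd_add (μ : Fin 2) (hf : DifferentiableAt ℝ f x) (hg : DifferentiableAt ℝ g x) :
    pd μ (fun z => f z + g z) x = pd μ f x + pd μ g x := by
  simp [pd, fderiv_fun_add hf hg]

lemma pd_sub (μ : Fin 2) (hf : DifferentiableAt ℝ f x) (hg : DifferentiableAt ℝ g x) :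
    pd μ (fun z => f z - g z) x = pd μ f x - pd μ g x := by
  simp [pd, fderiv_fun_sub hf hg]

lemma pd_mul (μ : Fin 2) (hf : DifferentiableAt ℝ f x) (hg : DifferentiableAt ℝ g x) :
    pd μ (fun z => f z * g z) x = pd μ f x * g x + f x * pd μ g x := by
  simp only [pd, fderiv_fun_mul hf hg, add_apply, smul_apply, smul_eq_mul]
  ring

lemma pd_const_mul (μ : Fin 2) (hf : DifferentiableAt ℝ f x) (c : ℝ) :
    pd μ (fun z => c * f z) x = c * pd μ f x := by
  simp [pd, fderiv_const_mul hf]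

lemma ContDiff.differentiable_pd (hf : ContDiff ℝ 2 f) (μ : Fin 2) :
    Differentiable ℝ (pd μ f) :=
  ((hf.fderiv_right (m := 1) le_rfl).clm_apply contDiff_const).differentiable one_ne_zero

lemma pd_pd_eq_fderiv_fderiv (hf : ContDiff ℝ 2 f) (μ ν : Fin 2) :
    pd μ (pd ν f) x = fderiv ℝ (fderiv ℝ f) x (Pi.single μ 1) (Pi.single ν 1) := by
  have hdf : DifferentiableAt ℝ (fderiv ℝ f) x :=
    (hf.fderiv_right (m := 1) le_rfl).differentiable one_ne_zero x
  change fderiv ℝ (fun z => fderiv ℝ f z (Pi.single ν 1)) x (Pi.single μ 1) = _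
  rw [fderiv_clm_apply hdf (differentiableAt_const _)]
  simp

lemma pd_comm (hf : ContDiff ℝ 2 f) (x : Fin 2 → ℝ) (μ ν : Fin 2) :
    pd μ (pd ν f) x = pd ν (pd μ f) x := by
  rw [pd_pd_eq_fderiv_fderiv hf, pd_pd_eq_fderiv_fderiv hf]
  exact (hf.contDiffAt.isSymmSndFDerivAt (by simp)) _ _

end Calculus

section Beltrami

variable {hpp hmm Z : (Fin 2 → ℝ) → ℝ}

lemma Wp_add_hpp_mul_Wm (hy : ∀ x, hpp x * hmm x ≠ 1) (x : Fin 2 → ℝ) :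
    Wp hpp hmm Z x + hpp x * Wm hpp hmm Z x = pd 0 Z x := by
  have hD : 1 - hpp x * hmm x ≠ 0 := sub_ne_zero.2 (hy x).symm
  simp only [Wp, Wm]
  field_simp
  ring

lemma Wm_add_hmm_mul_Wp (hy : ∀ x, hpp x * hmm x ≠ 1) (x : Fin 2 → ℝ) :
    Wm hpp hmm Z x + hmm x * Wp hpp hmm Z x = pd 1 Z x := by
  have hD : 1 - hpp x * hmm x ≠ 0 := sub_ne_zero.2 (hy x).symm
  simp only [Wp, Wm]
  field_simp
  ring

lemma differentiable_Wm (h1 : Differentiable ℝ hpp) (h2 : Differentiable ℝ hmm)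
    (h3 : ContDiff ℝ 2 Z) (hy : ∀ x, hpp x * hmm x ≠ 1) :
    Differentiable ℝ (Wm hpp hmm Z) :=
  (((differentiable_const 1).sub (h1.mul h2)).inv fun x => sub_ne_zero.2 (hy x).symm).mul
    ((h3.differentiable_pd 1).sub (h2.mul (h3.differentiable_pd 0)))

lemma differentiable_Wp (h1 : Differentiable ℝ hpp) (h2 : Differentiable ℝ hmm)
    (h3 : ContDiff ℝ 2 Z) (hy : ∀ x, hpp x * hmm x ≠ 1) :
    Differentiable ℝ (Wp hpp hmm Z) :=
  (((differentiable_const 1).sub (h1.mul h2)).inv fun x => sub_ne_zero.2 (hy x).symm).mul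
    ((h3.differentiable_pd 0).sub (h1.mul (h3.differentiable_pd 1)))

lemma RHS_eq_pd_Wm_add_pd_Wp (h1 : Differentiable ℝ hpp) (h2 : Differentiable ℝ hmm)
    (h3 : ContDiff ℝ 2 Z) (hy : ∀ x, hpp x * hmm x ≠ 1) (x : Fin 2 → ℝ) :
    RHS hpp hmm Z x = pd 0 (Wm hpp hmm Z) x + pd 1 (Wp hpp hmm Z) x
      - (pd 0 (pd 1 Z) x + pd 1 (pd 0 Z) x) / 2 := by
  have hD : ∀ z, 1 - hpp z * hmm z ≠ 0 := fun z => sub_ne_zero.2 (hy z).symm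
  have hm : (fun z => (1 + hpp z * hmm z) / (1 - hpp z * hmm z) * pd 1 Z z
      - 2 * hmm z / (1 - hpp z * hmm z) * pd 0 Z z) = fun z => 2 * Wm hpp hmm Z z - pd 1 Z z := by
    funext z
    simp only [Wm]
    field_simp [hD z]
    ring
  have hp : (fun z => (1 + hpp z * hmm z) / (1 - hpp z * hmm z) * pd 0 Z z
      - 2 * hpp z / (1 - hpp z * hmm z) * pd 1 Z z) = fun z => 2 * Wp hpp hmm Z z - pd 0 Z z := by
    funext z
    simp only [Wp]
    field_simp [hD z]
    ring
  have hWm := differentiable_Wm h1 h2 h3 hy x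
  have hWp := differentiable_Wp h1 h2 h3 hy x
  rw [RHS, hm, hp, pd_sub _ (hWm.const_mul 2) (h3.differentiable_pd 1 x),
    pd_sub _ (hWp.const_mul 2) (h3.differentiable_pd 0 x), pd_const_mul _ hWm,
    pd_const_mul _ hWp]
  ring

lemma pd_Wp_add_hpp_mul_Wm (h1 : Differentiable ℝ hpp) (h2 : Differentiable ℝ hmm)
    (h3 : ContDiff ℝ 2 Z) (hy : ∀ x, hpp x * hmm x ≠ 1) (μ : Fin 2) (x : Fin 2 → ℝ) :
    pd μ (Wp hpp hmm Z) x + (pd μ hpp x * Wm hpp hmm Z x + hpp x * pd μ (Wm hpp hmm Z) x)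
      = pd μ (pd 0 Z) x := by
  have hWm := differentiable_Wm h1 h2 h3 hy x
  rw [← pd_mul _ (h1 x) hWm, ← pd_add (g := fun z => hpp z * Wm hpp hmm Z z) _
    (differentiable_Wp h1 h2 h3 hy x) ((h1 x).mul hWm)]
  simp only [Wp_add_hpp_mul_Wm hy]

lemma pd_Wm_add_hmm_mul_Wp (h1 : Differentiable ℝ hpp) (h2 : Differentiable ℝ hmm)
    (h3 : ContDiff ℝ 2 Z) (hy : ∀ x, hpp x * hmm x ≠ 1) (μ : Fin 2) (x : Fin 2 → ℝ) :
    pd μ (Wm hpp hmm Z) x + (pd μ hmm x * Wp hpp hmm Z x + hmm x * pd μ (Wp hpp hmm Z) x)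
      = pd μ (pd 1 Z) x := by
  have hWp := differentiable_Wp h1 h2 h3 hy x
  rw [← pd_mul _ (h2 x) hWp, ← pd_add (g := fun z => hmm z * Wp hpp hmm Z z) _
    (differentiable_Wm h1 h2 h3 hy x) ((h2 x).mul hWp)]
  simp only [Wm_add_hmm_mul_Wp hy]

end Beltrami

/-- The Beltrami identity `∇₊(1−y)⁻¹∇₋Z = ∇₋(1−y)⁻¹∇₊Z = ½∂_α(√g g^{αβ}∂_βZ)`
for a scalar `Z`. -/
theorem stmt17 (hpp hmm Z : (Fin 2 → ℝ) → ℝ)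
    (h1 : ContDiff ℝ (⊤ : ℕ∞) hpp) (h2 : ContDiff ℝ (⊤ : ℕ∞) hmm)
    (h3 : ContDiff ℝ (⊤ : ℕ∞) Z)
    (hy : ∀ x, hpp x * hmm x ≠ 1) :
    ∀ x,
      (pd 0 (Wm hpp hmm Z) x - hpp x * pd 1 (Wm hpp hmm Z) x
          - pd 1 hpp x * Wm hpp hmm Z x = RHS hpp hmm Z x) ∧
      (pd 1 (Wp hpp hmm Z) x - hmm x * pd 0 (Wp hpp hmm Z) x
          - pd 0 hmm x * Wp hpp hmm Z x = RHS hpp hmm Z x) := by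
  intro x
  have hA : Differentiable ℝ hpp := h1.differentiable (by simp)
  have hB : Differentiable ℝ hmm := h2.differentiable (by simp)
  have hZ : ContDiff ℝ 2 Z := h3.of_le (by exact WithTop.coe_le_coe.2 le_top)
  have hRHS := RHS_eq_pd_Wm_add_pd_Wp hA hB hZ hy x
  have hminus := pd_Wp_add_hpp_mul_Wm hA hB hZ hy 1 x
  have hplus := pd_Wm_add_hmm_mul_Wp hA hB hZ hy 0 x
  have hmixed := pd_comm hZ x 0 1
  constructor <;> linarith
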